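/- In the setting of the non-scattering theorem (existence of $\tilde u$ solving the two-phase problem with $\mathrm{supp}\,\mu_\pm\subset D_\pm=\{\pm\tilde u>0\}$, and a real-valued incident field $u_0$ with $u_0<0$ on $\partial D_+\cup\partial D_-$), if the obstacles touch, i.e. $\partial D_+\cap\partial D_-\neq\emptyset$, then the common boundary is a two-phase free boundary for the total field: near $\partial D_+\cap\partial D_-$ one has $u_{\rho_\pm}>u_0$ in $D_+$ and $u_{\rho_\pm}<u_0$ in $D_-$. Moreover, for each $x_0\in\partial D_+\cap\partial D_-$, the limits $\lim_{D_+\ni x\to x_0}\rho_+(x)=-\lambda_+/u_0(x_0)>0$ and $\lim_{D_-\ni x\to x_0}\rho_-(x)=-\lambda_- /u_0(x_0)>0$ both exist. -/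

import Mathlib

open MeasureTheory Filter Topology Set Metric

noncomputable section

abbrev Euc (n : ℕ) := EuclideanSpace ℝ (Fin n)

/-- The Laplacian of a function on `ℝⁿ`. -/
def laplacian {n : ℕ} (φ : Euc n → ℝ) (x : Euc n) : ℝ :=
  ∑ i : Fin n, iteratedFDeriv ℝ 2 φ x ![EuclideanSpace.single i (1:ℝ), EuclideanSpace.single i 1]

/-- Smooth test functions compactly supported in `Ω`. -/
def IsTestFun {n : ℕ} (Ω : Set (Euc n)) (φ : Euc n → ℝ) : Prop :=
  ContDiff ℝ (⊤ : ℕ∞) φ ∧ HasCompactSupport φ ∧ tsupport φ ⊆ Ω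

/-- A bounded Lipschitz domain: open, connected, bounded, and near every boundary
point the set is the region above the graph of a Lipschitz function. -/
def IsBoundedLipschitzDomain {n : ℕ} (Ω : Set (Euc n)) : Prop :=
  IsOpen Ω ∧ IsConnected Ω ∧ Bornology.IsBounded Ω ∧
  ∀ x ∈ frontier Ω, ∃ v : Euc n, ‖v‖ = 1 ∧
    ∃ (g : (ℝ ∙ v)ᗮ → ℝ) (L : NNReal) (U : Set (Euc n)), LipschitzWith L g ∧ U ∈ 𝓝 x ∧
      ∀ y ∈ U, (y ∈ Ω ↔ g (Submodule.orthogonalProjectionOnto (ℝ ∙ v)ᗮ y) < (inner ℝ y v : ℝ))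

/-- `du` is the weak (distributional) gradient of `u`. -/
def HasWeakGradient {n : ℕ} (u : Euc n → ℝ) (du : Euc n → Euc n) : Prop :=
  LocallyIntegrable u volume ∧ LocallyIntegrable du volume ∧
  ∀ φ : Euc n → ℝ, IsTestFun Set.univ φ → ∀ v : Euc n,
    ∫ x, u x * fderiv ℝ φ x v = - ∫ x, (inner ℝ (du x) v : ℝ) * φ x

/-- `u ∈ H¹₀(Ω)` with weak gradient `du`: square integrable, with square integrable weak
gradient, and approximable in the `H¹`-norm by test functions supported in `Ω`. -/
def MemH10 {n : ℕ} (Ω : Set (Euc n)) (u : Euc n → ℝ) (du : Euc n → Euc n) : Prop :=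
  MemLp u 2 volume ∧ MemLp du 2 volume ∧ HasWeakGradient u du ∧
  ∃ φs : ℕ → Euc n → ℝ, (∀ j, IsTestFun Ω (φs j)) ∧
    Tendsto (fun j => ∫ x, ((u x - φs j x) ^ 2 + ‖du x - gradient (φs j) x‖ ^ 2)) atTop (𝓝 0)

/-- The square `k_*(Ω)²` of the first Dirichlet eigenvalue of `-Δ` on `Ω`,
as the infimum of the Rayleigh quotient over test functions. -/
def kStarSq {n : ℕ} (Ω : Set (Euc n)) : ℝ :=
  sInf {r : ℝ | ∃ φ : Euc n → ℝ, IsTestFun Ω φ ∧ φ ≠ 0 ∧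
    r = (∫ x, ‖gradient φ x‖ ^ 2) / ∫ x, (φ x) ^ 2}

/-- The essential support of a measurable function. -/
def essSupp {n : ℕ} (f : Euc n → ℝ) : Set (Euc n) :=
  {x | ∀ U ∈ 𝓝 x, volume {y ∈ U | f y ≠ 0} ≠ 0}

/-! The contrasts are recovered from the equations pointwise. Subtracting the equations of `u₀`
and of `u_ρ = u₀ + ũ` from the two-phase equation of `ũ` eliminates the Laplacian: the locally
bounded function `k₊²ũ⁺ - k₋²ũ⁻ + k₀² u₀ - (k₀² + ρ₊χ_{D₊} - ρ₋χ_{D₋}) u_ρ` is the distribution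
`λ₊χ_{D₊} - μ₊ - λ₋χ_{D₋} + μ₋`. In `D₊ \ supp μ₊` both sides are continuous, so
`ρ₊ u_ρ = (k₊² - k₀²) ũ - λ₊` there, and similarly in `D₋`. Since `ũ` vanishes on `∂D±` and
`u_ρ = u₀ < 0` there, the contrasts tend to `-λ±/u₀` at the boundary. -/

theorem tendsto_nhdsWithin_of_forall_mul_eq {X : Type*} [TopologicalSpace X] {D K : Set X}
    {x₀ : X} (hK : IsClosed K) (hx₀ : x₀ ∉ K) {ρ w f : X → ℝ} (hw : ContinuousAt w x₀)
    (hf : ContinuousAt f x₀) (hw₀ : w x₀ ≠ 0) (h : ∀ x ∈ D \ K, ρ x * w x = f x) :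
    Tendsto ρ (𝓝[D] x₀) (𝓝 (f x₀ / w x₀)) := by
  refine ((hf.div hw hw₀).tendsto.mono_left nhdsWithin_le_nhds).congr' ?_
  filter_upwards [self_mem_nhdsWithin,
    mem_nhdsWithin_of_mem_nhds (hK.isOpen_compl.mem_nhds hx₀),
    mem_nhdsWithin_of_mem_nhds (hw.eventually_ne hw₀)] with x hxD hxK hwx
  exact (eq_div_of_mul_eq hwx (h x ⟨hxD, hxK⟩)).symm

section Localization

variable {E : Type*} [NormedAddCommGroup E] [NormedSpace ℝ E] [FiniteDimensional ℝ E]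
  [MeasurableSpace E] [BorelSpace E] {μ : Measure E} [IsLocallyFiniteMeasure μ]
  [μ.IsOpenPosMeasure]

theorem IsOpen.eqOn_of_integral_mul_eq_const_mul {U : Set E} (hU : IsOpen U) {f : E → ℝ}
    (hf : LocallyIntegrable f μ) (hfU : ContinuousOn f U) (c : ℝ)
    (h : ∀ g : E → ℝ, ContDiff ℝ (⊤ : ℕ∞) g → HasCompactSupport g → tsupport g ⊆ U →
      ∫ x, g x * f x ∂μ = c * ∫ x, g x ∂μ) :
    EqOn f (fun _ => c) U := by
  have hae : ∀ᵐ x ∂μ, x ∈ U → f x - c = 0 := by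
    refine hU.ae_eq_zero_of_integral_contDiff_smul_eq_zero
      ((hf.sub (locallyIntegrable_const c)).locallyIntegrableOn U) fun g hg hgs hgU => ?_
    have hgf : Integrable (fun x => g x * f x) μ := by
      simpa only [smul_eq_mul] using
        hf.integrable_smul_left_of_hasCompactSupport hg.continuous hgs
    have hgc : Integrable (fun x => g x * c) μ :=
      (hg.continuous.integrable_of_hasCompactSupport hgs).mul_const c
    simp only [smul_eq_mul, mul_sub]
    rw [integral_sub hgf hgc, h g hg hgs hgU, integral_mul_const, mul_comm, sub_self]
  refine Measure.eqOn_open_of_ae_eq (μ := μ) ?_ hU hfU continuousOn_const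
  rw [EventuallyEq, ae_restrict_iff' hU.measurableSet]
  filter_upwards [hae] with x hx hxU using sub_eq_zero.1 (hx hxU)

theorem tendsto_nhdsWithin_of_integral_mul_eq {D K : Set E} (hD : IsOpen D) (hK : IsClosed K)
    {x₀ : E} (hx₀ : x₀ ∉ K) {S ρ g w : E → ℝ} {c : ℝ} (hS : LocallyIntegrable S μ)
    (hSc : ∀ φ : E → ℝ, ContDiff ℝ (⊤ : ℕ∞) φ → HasCompactSupport φ → tsupport φ ⊆ D \ K →
      ∫ x, φ x * S x ∂μ = c * ∫ x, φ x ∂μ)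
    (hSD : ∀ x ∈ D, S x = g x + ρ x * w x) (hρ : ContinuousOn ρ D) (hg : Continuous g)
    (hg₀ : g x₀ = 0) (hw : Continuous w) (hw₀ : w x₀ ≠ 0) :
    Tendsto ρ (𝓝[D] x₀) (𝓝 (c / w x₀)) := by
  have hSDK : ContinuousOn S (D \ K) :=
    (hg.continuousOn.add ((hρ.mono sdiff_subset).mul hw.continuousOn)).congr
      fun x hx => hSD x hx.1
  have hS_eq := (hD.sdiff hK).eqOn_of_integral_mul_eq_const_mul hS hSDK c hSc
  have := tendsto_nhdsWithin_of_forall_mul_eq (ρ := ρ) (f := fun x => c - g x) hK hx₀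
    hw.continuousAt (continuous_const.sub hg).continuousAt hw₀ fun x hx => by
      linarith [hSD x hx.1, hS_eq hx]
  rwa [hg₀, sub_zero] at this

end Localization

section SupportedIn

variable {X : Type*} [TopologicalSpace X] {ν : (X → ℝ) → ℝ} {K : Set X} {φ : X → ℝ}

/-- `supp ν ⊆ K`, for a distribution `ν`. -/
def IsSupportedIn (ν : (X → ℝ) → ℝ) (K : Set X) : Prop :=
  ∀ φ : X → ℝ, (∃ U, IsOpen U ∧ K ⊆ U ∧ ∀ x ∈ U, φ x = 0) → ν φ = 0

theorem IsSupportedIn.apply_eq_zero (hν : IsSupportedIn ν K) (hφ : Disjoint (tsupport φ) K) :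
    ν φ = 0 :=
  hν φ ⟨(tsupport φ)ᶜ, (isClosed_tsupport φ).isOpen_compl, hφ.subset_compl_left,
    fun _ hx => image_eq_zero_of_notMem_tsupport hx⟩

variable [MeasurableSpace X] {μ : Measure X} {D : Set X}

theorem IsSupportedIn.setIntegral_sub_eq (hν : IsSupportedIn ν K) (a : ℝ)
    (hφ : tsupport φ ⊆ D \ K) : a * ∫ x in D, φ x ∂μ - ν φ = a * ∫ x, φ x ∂μ := by
  rw [hν.apply_eq_zero (disjoint_sdiff_left.mono_left hφ), sub_zero,
    setIntegral_eq_integral_of_forall_compl_eq_zero fun x hx =>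
      image_eq_zero_of_notMem_tsupport fun h => hx (hφ h).1]

theorem IsSupportedIn.setIntegral_sub_eq_zero (hν : IsSupportedIn ν K) (hKD : K ⊆ D) (a : ℝ)
    (hφ : Disjoint (tsupport φ) D) : a * ∫ x in D, φ x ∂μ - ν φ = 0 := by
  rw [hν.apply_eq_zero (hφ.mono_right hKD), sub_zero,
    setIntegral_eq_zero_of_forall_eq_zero fun x hx =>
      image_eq_zero_of_notMem_tsupport fun h => hφ.ne_of_mem h hx rfl, mul_zero]

end SupportedIn

section RecoveredSource

variable {n : ℕ}

theorem continuous_laplacian {φ : Euc n → ℝ} (hφ : ContDiff ℝ (⊤ : ℕ∞) φ) :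
    Continuous (laplacian φ) :=
  continuous_finsetSum _ fun i _ =>
    (ContinuousMultilinearMap.apply ℝ (fun _ : Fin 2 => Euc n) ℝ
      ![EuclideanSpace.single i 1, EuclideanSpace.single i 1]).continuous.comp
      (hφ.continuous_iteratedFDeriv (WithTop.coe_le_coe.2 le_top))

theorem HasCompactSupport.laplacian {φ : Euc n → ℝ} (hφ : HasCompactSupport φ) :
    HasCompactSupport (laplacian φ) := by
  have : _root_.laplacian φ = (fun T : (Euc n) [×2]→L[ℝ] ℝ =>
      ∑ i : Fin n, T ![EuclideanSpace.single i (1 : ℝ), EuclideanSpace.single i 1]) ∘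
      _root_.iteratedFDeriv ℝ 2 φ := rfl
  rw [this]
  exact (hφ.iteratedFDeriv 2).comp_left (by simp)

/-- If `u₀ + ũ` solves `Δu + V u = 0`, `u₀` solves `Δu₀ + k₀² u₀ = 0` and `Δũ + F(ũ) = T`,
subtracting the first two equations from the third eliminates `Δ`: this is the density of `T`. -/
def recoveredSource (k₀ : ℝ) (V : Euc n → ℝ) (F : ℝ → ℝ) (u₀ tu : Euc n → ℝ) (x : Euc n) :
    ℝ :=
  F (tu x) + k₀ ^ 2 * u₀ x - V x * (u₀ x + tu x)

variable {k₀ : ℝ} {V : Euc n → ℝ} {F : ℝ → ℝ} {u₀ tu : Euc n → ℝ}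

theorem locallyIntegrable_recoveredSource (hV : AEStronglyMeasurable V volume) {C : ℝ}
    (hVC : ∀ x, |V x| ≤ C) (hF : Continuous F) (hu₀ : Continuous u₀) (htu : Continuous tu) :
    LocallyIntegrable (recoveredSource k₀ V F u₀ tu) volume := by
  have hVu : LocallyIntegrable (fun x => V x * (u₀ x + tu x)) volume :=
    (locallyIntegrable_iff).2 fun K hK =>
      ((hu₀.add htu).continuousOn.integrableOn_compact hK).bdd_mul hV.restrict
        (Eventually.of_forall hVC)
  exact ((hF.comp htu).add (continuous_const.mul hu₀)).locallyIntegrable.sub hVu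

theorem integral_mul_recoveredSource
    (hS : LocallyIntegrable (recoveredSource k₀ V F u₀ tu) volume) (hF : Continuous F)
    (hu₀ : Continuous u₀) (htu : Continuous tu) {T : (Euc n → ℝ) → ℝ}
    (htotal : ∀ φ : Euc n → ℝ, IsTestFun univ φ →
      ∫ x, ((u₀ x + tu x) * laplacian φ x + V x * (u₀ x + tu x) * φ x) = 0)
    (hinc : ∀ φ : Euc n → ℝ, IsTestFun univ φ →
      ∫ x, u₀ x * (laplacian φ x + k₀ ^ 2 * φ x) = 0)
    (hscat : ∀ φ : Euc n → ℝ, IsTestFun univ φ →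
      ∫ x, (tu x * laplacian φ x + F (tu x) * φ x) = T φ)
    {φ : Euc n → ℝ} (hφ : IsTestFun univ φ) :
    ∫ x, φ x * recoveredSource k₀ V F u₀ tu x = T φ := by
  obtain ⟨hφs, hφc, -⟩ := hφ
  have hΔ := continuous_laplacian hφs
  have iS : Integrable (fun x => φ x * recoveredSource k₀ V F u₀ tu x) := by
    simpa only [smul_eq_mul] using
      hS.integrable_smul_left_of_hasCompactSupport hφs.continuous hφc
  have iscat : Integrable (fun x => tu x * laplacian φ x + F (tu x) * φ x) :=
    ((htu.mul hΔ).add ((hF.comp htu).mul hφs.continuous)).integrable_of_hasCompactSupport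
      (hφc.laplacian.mul_left.add hφc.mul_left)
  have iinc : Integrable (fun x => u₀ x * (laplacian φ x + k₀ ^ 2 * φ x)) :=
    (hu₀.mul (hΔ.add (continuous_const.mul hφs.continuous))).integrable_of_hasCompactSupport
      (hφc.laplacian.add hφc.mul_left).mul_left
  have htotal_eq : ∀ x, (u₀ x + tu x) * laplacian φ x + V x * (u₀ x + tu x) * φ x =
      tu x * laplacian φ x + F (tu x) * φ x + u₀ x * (laplacian φ x + k₀ ^ 2 * φ x) -
        φ x * recoveredSource k₀ V F u₀ tu x := fun x => by
    unfold recoveredSource; ring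
  have iscat_inc : Integrable (fun x =>
      tu x * laplacian φ x + F (tu x) * φ x + u₀ x * (laplacian φ x + k₀ ^ 2 * φ x)) :=
    iscat.add iinc
  have h := htotal φ ⟨hφs, hφc, subset_univ _⟩
  simp_rw [htotal_eq] at h
  rw [integral_sub iscat_inc iS, integral_add iscat iinc,
    hscat φ ⟨hφs, hφc, subset_univ _⟩, hinc φ ⟨hφs, hφc, subset_univ _⟩] at h
  linarith

end RecoveredSource

theorem abs_indicator_le {X : Type*} {D : Set X} {ρ : X → ℝ} {C : ℝ}
    (h : ∀ x ∈ D, |ρ x| ≤ C) (x : X) : |D.indicator ρ x| ≤ max C 0 := by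
  by_cases hx : x ∈ D
  · rw [indicator_of_mem hx]; exact (h x hx).trans (le_max_left _ _)
  · rw [indicator_of_notMem hx, abs_zero]; exact le_max_right _ _

section TwoPhase

variable {n : ℕ}

def twoPhaseNonlinearity (kp km : ℝ) (t : ℝ) : ℝ :=
  kp ^ 2 * max t 0 - km ^ 2 * max (-t) 0

def twoPhasePotential (k₀ : ℝ) (Dp Dm : Set (Euc n)) (ρp ρm : Euc n → ℝ) (x : Euc n) : ℝ :=
  k₀ ^ 2 + Dp.indicator ρp x - Dm.indicator ρm x

def twoPhaseSource (lp lm : ℝ) (Dp Dm : Set (Euc n)) (μp μm : (Euc n → ℝ) → ℝ)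
    (φ : Euc n → ℝ) : ℝ :=
  (lp * ∫ x in Dp, φ x) - μp φ - ((lm * ∫ x in Dm, φ x) - μm φ)

variable {k₀ kp km lp lm : ℝ} {tu u₀ ρp ρm : Euc n → ℝ} {Dp Dm Kp Km : Set (Euc n)}
  {μp μm : (Euc n → ℝ) → ℝ} {x₀ : Euc n}

theorem continuous_twoPhaseNonlinearity : Continuous (twoPhaseNonlinearity kp km) := by
  unfold twoPhaseNonlinearity; fun_prop

theorem abs_twoPhasePotential_le {Cp Cm : ℝ} (hCp : ∀ x ∈ Dp, |ρp x| ≤ Cp)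
    (hCm : ∀ x ∈ Dm, |ρm x| ≤ Cm) (x : Euc n) :
    |twoPhasePotential k₀ Dp Dm ρp ρm x| ≤ k₀ ^ 2 + max Cp 0 + max Cm 0 := by
  have hp := abs_le.1 (abs_indicator_le hCp x)
  have hm := abs_le.1 (abs_indicator_le hCm x)
  exact abs_le.2 ⟨by unfold twoPhasePotential; linarith [sq_nonneg k₀],
    by unfold twoPhasePotential; linarith⟩

theorem tendsto_contrast_pos (hDp : Dp = {x | 0 < tu x}) (hDm : Dm = {x | tu x < 0})
    (htu : Continuous tu) (hu₀ : Continuous u₀) (hKp : IsCompact Kp) (hKpD : Kp ⊆ Dp)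
    (hKmD : Km ⊆ Dm) (hμp : IsSupportedIn μp Kp) (hμm : IsSupportedIn μm Km)
    (hS : LocallyIntegrable (recoveredSource k₀ (twoPhasePotential k₀ Dp Dm ρp ρm)
      (twoPhaseNonlinearity kp km) u₀ tu) volume)
    (hST : ∀ φ, ContDiff ℝ (⊤ : ℕ∞) φ → HasCompactSupport φ →
      ∫ x, φ x * recoveredSource k₀ (twoPhasePotential k₀ Dp Dm ρp ρm)
        (twoPhaseNonlinearity kp km) u₀ tu x = twoPhaseSource lp lm Dp Dm μp μm φ)
    (hρp : ContinuousOn ρp Dp) (hx₀ : x₀ ∈ frontier Dp) (hu₀x₀ : u₀ x₀ ≠ 0) :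
    Tendsto ρp (𝓝[Dp] x₀) (𝓝 (-lp / u₀ x₀)) := by
  subst hDp hDm
  have htu₀ : tu x₀ = 0 := (frontier_lt_subset_eq continuous_const htu hx₀ : 0 = tu x₀).symm
  have key := tendsto_nhdsWithin_of_integral_mul_eq (w := fun x => -(u₀ x + tu x))
    (g := fun x => (kp ^ 2 - k₀ ^ 2) * tu x) (isOpen_lt continuous_const htu) hKp.isClosed
    (fun h => (hKpD h).ne' htu₀) hS
    (fun φ hφ hφc hφD => by
      rw [hST φ hφ hφc, twoPhaseSource, hμp.setIntegral_sub_eq lp hφD,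
        hμm.setIntegral_sub_eq_zero hKmD lm (disjoint_left.2 fun x hx hx' =>
          (hφD hx).1.out.not_gt hx'), sub_zero])
    (fun x (hx : 0 < tu x) => by
      simp only [recoveredSource, twoPhasePotential, twoPhaseNonlinearity,
        indicator_of_mem (show x ∈ {x | 0 < tu x} from hx),
        indicator_of_notMem (show x ∉ {x | tu x < 0} from hx.not_gt), max_eq_left hx.le,
        max_eq_right (neg_nonpos.2 hx.le)]
      ring)
    hρp (by fun_prop) (by simp [htu₀]) (by fun_prop) (by simpa [htu₀] using hu₀x₀)
  simpa [htu₀, div_neg, neg_div] using key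

theorem tendsto_contrast_neg (hDp : Dp = {x | 0 < tu x}) (hDm : Dm = {x | tu x < 0})
    (htu : Continuous tu) (hu₀ : Continuous u₀) (hKm : IsCompact Km) (hKpD : Kp ⊆ Dp)
    (hKmD : Km ⊆ Dm) (hμp : IsSupportedIn μp Kp) (hμm : IsSupportedIn μm Km)
    (hS : LocallyIntegrable (recoveredSource k₀ (twoPhasePotential k₀ Dp Dm ρp ρm)
      (twoPhaseNonlinearity kp km) u₀ tu) volume)
    (hST : ∀ φ, ContDiff ℝ (⊤ : ℕ∞) φ → HasCompactSupport φ →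
      ∫ x, φ x * recoveredSource k₀ (twoPhasePotential k₀ Dp Dm ρp ρm)
        (twoPhaseNonlinearity kp km) u₀ tu x = twoPhaseSource lp lm Dp Dm μp μm φ)
    (hρm : ContinuousOn ρm Dm) (hx₀ : x₀ ∈ frontier Dm) (hu₀x₀ : u₀ x₀ ≠ 0) :
    Tendsto ρm (𝓝[Dm] x₀) (𝓝 (-lm / u₀ x₀)) := by
  subst hDp hDm
  have htu₀ : tu x₀ = 0 := frontier_lt_subset_eq htu continuous_const hx₀
  have key := tendsto_nhdsWithin_of_integral_mul_eq (w := fun x => u₀ x + tu x)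
    (g := fun x => (km ^ 2 - k₀ ^ 2) * tu x) (isOpen_lt htu continuous_const) hKm.isClosed
    (fun h => (hKmD h).ne htu₀) hS
    (fun φ hφ hφc hφD => by
      rw [hST φ hφ hφc, twoPhaseSource, hμm.setIntegral_sub_eq lm hφD,
        hμp.setIntegral_sub_eq_zero hKpD lp (disjoint_left.2 fun x hx hx' =>
          (hφD hx).1.out.not_gt hx'), zero_sub, neg_mul])
    (fun x (hx : tu x < 0) => by
      simp only [recoveredSource, twoPhasePotential, twoPhaseNonlinearity,
        indicator_of_mem (show x ∈ {x | tu x < 0} from hx),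
        indicator_of_notMem (show x ∉ {x | 0 < tu x} from hx.not_gt), max_eq_right hx.le,
        max_eq_left (neg_nonneg.2 hx.le)]
      ring)
    hρm (by fun_prop) (by simp [htu₀]) (by fun_prop) (by simpa [htu₀] using hu₀x₀)
  simpa [htu₀] using key

end TwoPhase

theorem stmt_1_general {n : ℕ}
    (k₀ kp km lp lm : ℝ)
    (hlp : 0 < lp) (hlm : 0 < lm)
    (μp μm : (Euc n → ℝ) →ₗ[ℝ] ℝ)
    (tu : Euc n → ℝ) (htu_cont : Continuous tu)
    (Dp Dm : Set (Euc n)) (hDp : Dp = {x | 0 < tu x}) (hDm : Dm = {x | tu x < 0})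
    (hμp_supp : ∃ K, IsCompact K ∧ K ⊆ Dp ∧ ∀ φ : Euc n → ℝ,
      (∃ U, IsOpen U ∧ K ⊆ U ∧ ∀ x ∈ U, φ x = 0) → μp φ = 0)
    (hμm_supp : ∃ K, IsCompact K ∧ K ⊆ Dm ∧ ∀ φ : Euc n → ℝ,
      (∃ U, IsOpen U ∧ K ⊆ U ∧ ∀ x ∈ U, φ x = 0) → μm φ = 0)
    -- the two-phase equation for `ũ`, in the sense of distributions
    (heq : ∀ φ : Euc n → ℝ, IsTestFun Set.univ φ →
      ∫ x, (tu x * laplacian φ x + (kp ^ 2 * max (tu x) 0 - km ^ 2 * max (-tu x) 0) * φ x)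
        = (lp * ∫ x in Dp, φ x) - μp φ - ((lm * ∫ x in Dm, φ x) - μm φ))
    -- the real-valued incident field `u₀`
    (u₀ : Euc n → ℝ) (hu₀c : Continuous u₀)
    (hu₀ : ∀ φ : Euc n → ℝ, IsTestFun Set.univ φ →
      ∫ x, u₀ x * (laplacian φ x + k₀ ^ 2 * φ x) = 0)
    (hu₀neg : ∀ x ∈ frontier Dp ∪ frontier Dm, u₀ x < 0)
    -- the contrasts `ρ± ∈ L∞(D±)` produced in the non-scattering theorem
    (ρp ρm : Euc n → ℝ)
    (hρp : AEStronglyMeasurable ρp volume ∧ ∃ C : ℝ, ∀ x ∈ Dp, |ρp x| ≤ C)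
    (hρm : AEStronglyMeasurable ρm volume ∧ ∃ C : ℝ, ∀ x ∈ Dm, |ρm x| ≤ C)
    (hρpc : ContinuousOn ρp Dp) (hρmc : ContinuousOn ρm Dm)
    -- the (real-valued) total field is `u_ρ = u₀ + ũ`, i.e. the scattered field is `ũ`,
    -- and it solves `(Δ + k₀² + ρ₊χ_{D₊} - ρ₋χ_{D₋}) u_ρ = 0` in `ℝⁿ`
    (heqtotal : ∀ φ : Euc n → ℝ, IsTestFun Set.univ φ →
      ∫ x, ((u₀ x + tu x) * laplacian φ x
        + (k₀ ^ 2 + Set.indicator Dp ρp x - Set.indicator Dm ρm x) * (u₀ x + tu x) * φ x)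
        = 0) :
    -- the common boundary is a two-phase free boundary …
    (∃ U : Set (Euc n), IsOpen U ∧ frontier Dp ∩ frontier Dm ⊆ U ∧
      (∀ x ∈ U ∩ Dp, u₀ x < u₀ x + tu x) ∧ (∀ x ∈ U ∩ Dm, u₀ x + tu x < u₀ x)) ∧
    -- … and both limits of the contrasts exist and are positive
    ∀ x₀ ∈ frontier Dp ∩ frontier Dm,
      (0 < -lp / u₀ x₀ ∧ Tendsto ρp (𝓝[Dp] x₀) (𝓝 (-lp / u₀ x₀))) ∧
      (0 < -lm / u₀ x₀ ∧ Tendsto ρm (𝓝[Dm] x₀) (𝓝 (-lm / u₀ x₀))) := by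
  have hDpo : IsOpen Dp := hDp ▸ isOpen_lt continuous_const htu_cont
  have hDmo : IsOpen Dm := hDm ▸ isOpen_lt htu_cont continuous_const
  obtain ⟨hρpm, Cp, hCp⟩ := hρp
  obtain ⟨hρmm, Cm, hCm⟩ := hρm
  obtain ⟨Kp, hKp, hKpD, hμp⟩ : ∃ K, IsCompact K ∧ K ⊆ Dp ∧ IsSupportedIn μp K := hμp_supp
  obtain ⟨Km, hKm, hKmD, hμm⟩ : ∃ K, IsCompact K ∧ K ⊆ Dm ∧ IsSupportedIn μm K := hμm_supp
  have hS : LocallyIntegrable (recoveredSource k₀ (twoPhasePotential k₀ Dp Dm ρp ρm)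
      (twoPhaseNonlinearity kp km) u₀ tu) volume :=
    locallyIntegrable_recoveredSource ((aestronglyMeasurable_const.add
      (hρpm.indicator hDpo.measurableSet)).sub (hρmm.indicator hDmo.measurableSet))
      (abs_twoPhasePotential_le hCp hCm) continuous_twoPhaseNonlinearity hu₀c htu_cont
  have hST (φ) (hφ : ContDiff ℝ (⊤ : ℕ∞) φ) (hφc : HasCompactSupport φ) :=
    integral_mul_recoveredSource (T := twoPhaseSource lp lm Dp Dm μp μm) hS
      continuous_twoPhaseNonlinearity hu₀c htu_cont heqtotal hu₀ heq ⟨hφ, hφc, subset_univ _⟩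
  refine ⟨⟨univ, isOpen_univ, subset_univ _, fun x hx => ?_, fun x hx => ?_⟩,
    fun x₀ hx₀ => ?_⟩
  · rw [hDp] at hx; exact lt_add_of_pos_right _ hx.2
  · rw [hDm] at hx; exact add_lt_of_neg_right _ hx.2
  have hu₀x₀ : u₀ x₀ < 0 := hu₀neg x₀ (Or.inl hx₀.1)
  exact ⟨⟨div_pos_of_neg_of_neg (neg_neg_of_pos hlp) hu₀x₀, tendsto_contrast_pos hDp hDm
      htu_cont hu₀c hKp hKpD hKmD hμp hμm hS hST hρpc hx₀.1 hu₀x₀.ne⟩,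
    ⟨div_pos_of_neg_of_neg (neg_neg_of_pos hlm) hu₀x₀, tendsto_contrast_neg hDp hDm
      htu_cont hu₀c hKm hKpD hKmD hμp hμm hS hST hρmc hx₀.2 hu₀x₀.ne⟩⟩

/-- touching obstacles: in the setting of the non-scattering theorem,
with contrasts `ρ±` and real-valued total field `u_ρ = u₀ + ũ`, if `∂D₊ ∩ ∂D₋ ≠ ∅`
then the common boundary is a two-phase free boundary (`u_ρ > u₀` in `D₊` and
`u_ρ < u₀` in `D₋` near `∂D₊ ∩ ∂D₋`), and for each `x₀ ∈ ∂D₊ ∩ ∂D₋` the limits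
`lim_{D₊ ∋ x → x₀} ρ₊(x) = -λ₊/u₀(x₀) > 0` and
`lim_{D₋ ∋ x → x₀} ρ₋(x) = -λ₋/u₀(x₀) > 0` both exist. -/
theorem stmt_1 {n : ℕ} (hn : 2 ≤ n)
    (k₀ kp km lp lm : ℝ) (hk₀ : 0 ≤ k₀) (hkp : 0 ≤ kp) (hkm : 0 ≤ km)
    (hlp : 0 < lp) (hlm : 0 < lm)
    (μp μm : (Euc n → ℝ) →ₗ[ℝ] ℝ)
    (tu : Euc n → ℝ) (htu_supp : HasCompactSupport tu) (htu_cont : Continuous tu)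
    (htu_int : LocallyIntegrable tu volume)
    (Dp Dm : Set (Euc n)) (hDp : Dp = {x | 0 < tu x}) (hDm : Dm = {x | tu x < 0})
    (hμp_supp : ∃ K, IsCompact K ∧ K ⊆ Dp ∧ ∀ φ : Euc n → ℝ,
      (∃ U, IsOpen U ∧ K ⊆ U ∧ ∀ x ∈ U, φ x = 0) → μp φ = 0)
    (hμm_supp : ∃ K, IsCompact K ∧ K ⊆ Dm ∧ ∀ φ : Euc n → ℝ,
      (∃ U, IsOpen U ∧ K ⊆ U ∧ ∀ x ∈ U, φ x = 0) → μm φ = 0)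
    -- the two-phase equation for `ũ`, in the sense of distributions
    (heq : ∀ φ : Euc n → ℝ, IsTestFun Set.univ φ →
      ∫ x, (tu x * laplacian φ x + (kp ^ 2 * max (tu x) 0 - km ^ 2 * max (-tu x) 0) * φ x)
        = (lp * ∫ x in Dp, φ x) - μp φ - ((lm * ∫ x in Dm, φ x) - μm φ))
    -- the real-valued incident field `u₀`
    (u₀ : Euc n → ℝ) (hu₀c : Continuous u₀)
    (hu₀ : ∀ φ : Euc n → ℝ, IsTestFun Set.univ φ →
      ∫ x, u₀ x * (laplacian φ x + k₀ ^ 2 * φ x) = 0)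
    (hu₀neg : ∀ x ∈ frontier Dp ∪ frontier Dm, u₀ x < 0)
    -- the contrasts `ρ± ∈ L∞(D±)` produced in the non-scattering theorem
    (ρp ρm : Euc n → ℝ)
    (hρp : AEStronglyMeasurable ρp volume ∧ ∃ C : ℝ, ∀ x ∈ Dp, |ρp x| ≤ C)
    (hρm : AEStronglyMeasurable ρm volume ∧ ∃ C : ℝ, ∀ x ∈ Dm, |ρm x| ≤ C)
    (hρpc : ContinuousOn ρp Dp) (hρmc : ContinuousOn ρm Dm)
    -- the (real-valued) total field is `u_ρ = u₀ + ũ`, i.e. the scattered field is `ũ`,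
    -- and it solves `(Δ + k₀² + ρ₊χ_{D₊} - ρ₋χ_{D₋}) u_ρ = 0` in `ℝⁿ`
    (heqtotal : ∀ φ : Euc n → ℝ, IsTestFun Set.univ φ →
      ∫ x, ((u₀ x + tu x) * laplacian φ x
        + (k₀ ^ 2 + Set.indicator Dp ρp x - Set.indicator Dm ρm x) * (u₀ x + tu x) * φ x)
        = 0)
    -- the obstacles touch
    (htouch : (frontier Dp ∩ frontier Dm).Nonempty) :
    -- the common boundary is a two-phase free boundary …
    (∃ U : Set (Euc n), IsOpen U ∧ frontier Dp ∩ frontier Dm ⊆ U ∧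
      (∀ x ∈ U ∩ Dp, u₀ x < u₀ x + tu x) ∧ (∀ x ∈ U ∩ Dm, u₀ x + tu x < u₀ x)) ∧
    -- … and both limits of the contrasts exist and are positive
    ∀ x₀ ∈ frontier Dp ∩ frontier Dm,
      (0 < -lp / u₀ x₀ ∧ Tendsto ρp (𝓝[Dp] x₀) (𝓝 (-lp / u₀ x₀))) ∧
      (0 < -lm / u₀ x₀ ∧ Tendsto ρm (𝓝[Dm] x₀) (𝓝 (-lm / u₀ x₀))) :=
  stmt_1_general k₀ kp km lp lm hlp hlm μp μm tu htu_cont Dp Dm hDp hDm hμp_supp hμm_supp heq u₀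
    hu₀c hu₀ hu₀neg ρp ρm hρp hρm hρpc hρmc heqtotal

end
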